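/- arXiv:2006.14485 — 3 statements merged into one kernel-verified Lean document; each statement's English description precedes it below -/
import Mathlib

section
/- Let $A_n(q)$ be polynomials with $\deg A_n \le n$, and let $A_n^*(q)=q^n A_n(1/q)$ be the reciprocal polynomials. If every minor of the Hankel matrix $[A_{i+j}(q)]_{i,j\ge 0}$ of order at most $r$ is a polynomial in $q$ with nonnegative coefficients, then the same holds for the Hankel matrix $[A^*_{i+j}(q)]_{i,j\ge 0}$. -/
open Polynomial

private lemma reflect_prod {ι : Type*} (s : Finset ι) (n : ι → ℕ) (p : ι → Polynomial ℝ)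
    (hp : ∀ i ∈ s, (p i).natDegree ≤ n i) :
    Polynomial.reflect (∑ i ∈ s, n i) (∏ i ∈ s, p i)
      = ∏ i ∈ s, Polynomial.reflect (n i) (p i) := by
  classical
  induction s using Finset.induction_on with
  | empty => simp
  | @insert a s ha ih =>
    rw [Finset.sum_insert ha, Finset.prod_insert ha, Finset.prod_insert ha,
      Polynomial.reflect_mul _ _ (hp a (Finset.mem_insert_self a s))
        ((Polynomial.natDegree_prod_le s p).trans
          (Finset.sum_le_sum fun i hi => hp i (Finset.mem_insert_of_mem hi))),
      ih fun i hi => hp i (Finset.mem_insert_of_mem hi)]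

/-- If every minor of order `≤ r` of the Hankel matrix `[A_{i+j}(q)]` is a polynomial with
nonnegative coefficients, then the same holds for the Hankel matrix of the reciprocal
polynomials `A*_n(q) = q^n A_n(1/q)` (realized as `Polynomial.reflect n (A n)` since
`deg A_n ≤ n`). -/
theorem hankel_reciprocal_qTP (r : ℕ) (A : ℕ → Polynomial ℝ)
    (hdeg : ∀ n, (A n).natDegree ≤ n)
    (h : ∀ k : ℕ, k ≤ r → ∀ (row col : Fin k → ℕ), StrictMono row → StrictMono col →
      ∀ i, 0 ≤ (Matrix.det (Matrix.of fun s t => A (row s + col t))).coeff i) :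
    ∀ k : ℕ, k ≤ r → ∀ (row col : Fin k → ℕ), StrictMono row → StrictMono col →
      ∀ i, 0 ≤ (Matrix.det (Matrix.of fun s t =>
        Polynomial.reflect (row s + col t) (A (row s + col t)))).coeff i := by
  intro k hk row col hrow hcol i
  set S : ℕ := (∑ s, row s) + (∑ s, col s) with hS
  have hprod : ∀ σ : Equiv.Perm (Fin k),
      (∏ s, Polynomial.reflect (row (σ s) + col s) (A (row (σ s) + col s)))
        = Polynomial.reflect S (∏ s, A (row (σ s) + col s)) := by
    intro σ
    have hSσ : S = ∑ s, (row (σ s) + col s) := by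
      rw [Finset.sum_add_distrib, hS]
      congr 1
      exact (Equiv.sum_comp σ row).symm
    rw [hSσ]
    exact (reflect_prod Finset.univ _ _ fun s _ => hdeg _).symm
  have hdet : Matrix.det (Matrix.of fun s t =>
        Polynomial.reflect (row s + col t) (A (row s + col t)))
      = Polynomial.reflect S (Matrix.det (Matrix.of fun s t => A (row s + col t))) := by
    rw [Matrix.det_apply', Matrix.det_apply']
    apply Polynomial.ext; intro j
    rw [Polynomial.coeff_reflect, Polynomial.finset_sum_coeff, Polynomial.finset_sum_coeff]
    apply Finset.sum_congr rfl
    intro σ _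
    have h1 : (∏ s, (Matrix.of fun s t =>
        Polynomial.reflect (row s + col t) (A (row s + col t))) (σ s) s)
        = Polynomial.reflect S (∏ s, (Matrix.of fun s t => A (row s + col t)) (σ s) s) := by
      simp only [Matrix.of_apply]
      exact hprod σ
    rw [h1]
    rw [show ((Equiv.Perm.sign σ : ℤ) : Polynomial ℝ)
        = Polynomial.C ((Equiv.Perm.sign σ : ℤ) : ℝ) by simp]
    simp [Polynomial.coeff_C_mul, Polynomial.coeff_reflect]
  rw [hdet, Polynomial.coeff_reflect]
  exact h k hk row col hrow hcol _
end

section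
/- Let $T_n(q)$ be polynomials defined by $T_0(q)=1$ and $T_n(q)=[ab(n-1)+abd+c\lambda+cq]T_{n-1}(q)+b(q+\lambda)T'_{n-1}(q)$ for $n\ge 1$, where $a,b,c,d,\lambda$ are nonnegative reals with $c>0$. Then for every $n$, $T_n(q)$ has only real zeros, all of which are at most $-\lambda$. -/
open Polynomial in
/-- Logarithmic derivative of a product of linear factors, evaluated away from the roots. -/
lemma logDeriv_aux (R : Multiset ℂ) (z : ℂ) (hz : ∀ r ∈ R, z ≠ r) :
    eval z (derivative (R.map (fun r => X - C r)).prod)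
      = eval z (R.map (fun r => X - C r)).prod * (R.map (fun r => (z - r)⁻¹)).sum := by
  induction R using Multiset.induction with
  | empty => simp
  | cons a R ih =>
    have hza : z - a ≠ 0 := sub_ne_zero.mpr (hz a (Multiset.mem_cons_self a R))
    have ih' := ih (fun r hr => hz r (Multiset.mem_cons_of_mem hr))
    simp only [Multiset.map_cons, Multiset.prod_cons, Multiset.sum_cons, derivative_mul,
      derivative_sub, derivative_X, derivative_C, sub_zero, one_mul, eval_add, eval_mul,
      eval_sub, eval_X, eval_C, ih']
    field_simp

/-- Imaginary part of `(z+l)/(z-r)` for a real `r ≤ -l`. -/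
lemma im_term_aux (z : ℂ) (l : ℝ) (r : ℂ) (hr : r.im = 0) :
    ((z + (l : ℂ)) * (z - r)⁻¹).im
      = z.im * ((-l - r.re) / Complex.normSq (z - r)) := by
  simp only [Complex.mul_im, Complex.inv_re, Complex.inv_im, Complex.add_re, Complex.add_im,
    Complex.sub_re, Complex.sub_im, Complex.ofReal_re, Complex.ofReal_im, hr, sub_zero, add_zero]
  ring

/-- Real part of `(z+l)/(z-r)` for real `z`, `r`. -/
lemma re_term_aux (z : ℂ) (l : ℝ) (r : ℂ) (hr : r.im = 0) (hz : z.im = 0) :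
    ((z + (l : ℂ)) * (z - r)⁻¹).re
      = (z.re + l) * (z.re - r.re) / Complex.normSq (z - r) := by
  simp only [Complex.mul_re, Complex.inv_re, Complex.inv_im, Complex.add_re, Complex.add_im,
    Complex.sub_re, Complex.sub_im, Complex.ofReal_re, Complex.ofReal_im, hr, hz, sub_zero,
    add_zero]
  ring

lemma im_multiset_sum (s : Multiset ℂ) : s.sum.im = (s.map Complex.im).sum := by
  induction s using Multiset.induction with
  | empty => simp
  | cons a s ih => simp [ih]

lemma re_multiset_sum (s : Multiset ℂ) : s.sum.re = (s.map Complex.re).sum := by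
  induction s using Multiset.induction with
  | empty => simp
  | cons a s ih => simp [ih]

open Polynomial in
/-- The row-generating polynomials of the generalized Lah triangle, defined by `T_0 = 1` and
`T_n(q) = [ab(n-1)+abd+cλ+cq] T_{n-1}(q) + b(q+λ) T'_{n-1}(q)`, have only real zeros,
all of which are at most `-λ`. -/
theorem generalizedLah_real_rooted (a b c d l : ℝ)
    (ha : 0 ≤ a) (hb : 0 ≤ b) (hc : 0 < c) (hd : 0 ≤ d) (hl : 0 ≤ l)
    (T : ℕ → Polynomial ℝ) (hT0 : T 0 = 1)
    (hT : ∀ n : ℕ, 1 ≤ n →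
      T n = (C (a*b*((n:ℝ)-1) + a*b*d + c*l) + C c * X) * T (n-1)
        + C b * (X + C l) * derivative (T (n-1))) :
    ∀ n : ℕ, ∀ z : ℂ, ((T n).map (algebraMap ℝ ℂ)).IsRoot z → z.im = 0 ∧ z.re ≤ -l := by
  intro n
  induction n with
  | zero =>
    intro z hz
    rw [hT0] at hz
    simp [IsRoot] at hz
  | succ n ih =>
    intro z hz
    set Q : Polynomial ℂ := (T n).map (algebraMap ℝ ℂ) with hQdef
    by_cases hQz : Q.eval z = 0
    · exact ih z hQz
    -- the recursion, over ℂ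
    set α : ℝ := a*b*(((n+1 : ℕ) : ℝ) - 1) + a*b*d + c*l with hαdef
    have hα : c * l ≤ α := by
      have h1 : (0:ℝ) ≤ ((n+1 : ℕ) : ℝ) - 1 := by push_cast; linarith [Nat.cast_nonneg (α := ℝ) n]
      have h2 := mul_nonneg (mul_nonneg ha hb) h1
      have h3 := mul_nonneg (mul_nonneg ha hb) hd
      simp only [hαdef]; linarith
    have hrec := hT (n+1) (by omega)
    simp only [Nat.add_sub_cancel, ← hαdef] at hrec
    have hz' : ((α : ℂ) + (c : ℂ) * z) * Q.eval z
        + (b : ℂ) * (z + (l : ℂ)) * (derivative Q).eval z = 0 := by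
      have := hz
      rw [IsRoot, hrec] at this
      simp only [Polynomial.map_add, Polynomial.map_mul, Polynomial.map_C, Polynomial.map_X,
        eval_add, eval_mul, eval_C, eval_X, Complex.coe_algebraMap, ← derivative_map,
        ← hQdef] at this
      exact this
    -- factor Q over ℂ
    have hQne : Q ≠ 0 := fun h => hQz (by rw [h]; simp)
    set R : Multiset ℂ := Q.roots with hRdef
    have hcard : Multiset.card R = Q.natDegree :=
      (splits_iff_card_roots).mp (IsAlgClosed.splits Q)
    have hfac : C Q.leadingCoeff * (R.map (fun r => X - C r)).prod = Q :=
      C_leadingCoeff_mul_prod_multiset_X_sub_C hcard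
    have hroots : ∀ r ∈ R, r.im = 0 ∧ r.re ≤ -l := by
      intro r hr
      exact ih r ((mem_roots hQne).mp hr)
    have hzR : ∀ r ∈ R, z ≠ r := by
      intro r hr h
      exact hQz (h ▸ ((mem_roots hQne).mp hr))
    -- logarithmic derivative identity
    set Sg : ℂ := (R.map (fun r => (z - r)⁻¹)).sum with hSgdef
    have hder : (derivative Q).eval z = Q.eval z * Sg := by
      conv_lhs => rw [← hfac]
      conv_rhs => rw [← hfac]
      rw [derivative_mul, derivative_C, zero_mul, zero_add]
      simp only [eval_mul, eval_C]
      rw [logDeriv_aux R z hzR]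
      ring
    -- the key equation
    have hE : (α : ℂ) + (c : ℂ) * z + (b : ℂ) * ((z + (l : ℂ)) * Sg) = 0 := by
      have h2 : Q.eval z * ((α : ℂ) + (c : ℂ) * z + (b : ℂ) * ((z + (l : ℂ)) * Sg)) = 0 := by
        rw [hder] at hz'
        linear_combination hz'
      rcases mul_eq_zero.mp h2 with h | h
      · exact absurd h hQz
      · exact h
    -- rewrite the sum term
    have hsum : (z + (l : ℂ)) * Sg = (R.map (fun r => (z + (l : ℂ)) * (z - r)⁻¹)).sum := by
      rw [hSgdef, ← Multiset.sum_map_mul_left]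
    rw [hsum] at hE
    set S : ℂ := (R.map (fun r => (z + (l : ℂ)) * (z - r)⁻¹)).sum with hSdef
    -- imaginary part
    have hSim : S.im = z.im * (R.map (fun r => (-l - r.re) / Complex.normSq (z - r))).sum := by
      rw [hSdef, im_multiset_sum, Multiset.map_map]
      rw [show ((fun x : ℂ => x.im) ∘ fun r => (z + (l:ℂ)) * (z - r)⁻¹)
          = fun r : ℂ => ((z + (l:ℂ)) * (z - r)⁻¹).im from rfl]
      rw [← Multiset.sum_map_mul_left]
      apply congrArg Multiset.sum
      apply Multiset.map_congr rfl
      intro r hr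
      exact im_term_aux z l r (hroots r hr).1
    have hwnonneg : (0:ℝ) ≤ (R.map (fun r => (-l - r.re) / Complex.normSq (z - r))).sum := by
      apply Multiset.sum_nonneg
      intro x hx
      obtain ⟨r, hr, rfl⟩ := Multiset.mem_map.mp hx
      apply div_nonneg
      · linarith [(hroots r hr).2]
      · exact Complex.normSq_nonneg _
    have him : z.im = 0 := by
      have h0 : ((α : ℂ) + (c : ℂ) * z + (b : ℂ) * S).im = 0 := by rw [hE]; rfl
      simp only [Complex.add_im, Complex.mul_im, Complex.ofReal_re, Complex.ofReal_im,
        zero_mul, add_zero, zero_add, hSim] at h0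
      -- h0 : c * z.im + b * (z.im * W) = 0
      by_contra hne
      set W := (R.map (fun r => (-l - r.re) / Complex.normSq (z - r))).sum with hW
      have hpos : 0 < c + b * W := by nlinarith
      have : z.im * (c + b * W) = 0 := by ring_nf; ring_nf at h0; linarith
      rcases mul_eq_zero.mp this with h | h
      · exact hne h
      · linarith
    refine ⟨him, ?_⟩
    -- real part
    by_contra hre
    push_neg at hre
    have hSre : (0:ℝ) ≤ S.re := by
      rw [hSdef, re_multiset_sum, Multiset.map_map]
      apply Multiset.sum_nonneg
      intro x hx
      obtain ⟨r, hr, rfl⟩ := Multiset.mem_map.mp hx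
      simp only [Function.comp_apply]
      rw [re_term_aux z l r (hroots r hr).1 him]
      apply div_nonneg
      · have := (hroots r hr).2
        apply mul_nonneg <;> linarith
      · exact Complex.normSq_nonneg _
    have h0 : ((α : ℂ) + (c : ℂ) * z + (b : ℂ) * S).re = 0 := by rw [hE]; rfl
    simp only [Complex.add_re, Complex.mul_re, Complex.ofReal_re, Complex.ofReal_im,
      zero_mul, sub_zero, him, mul_zero] at h0
    -- h0 : α + c * z.re + b * S.re = 0
    have hbS : 0 ≤ b * S.re := mul_nonneg hb hSre
    have : 0 < α + c * z.re := by nlinarith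
    linarith
end

section
/- For natural numbers $m\le n$ and integers $c,d$ with $d\ge 1$ and $d\ge c$, the numbers $R_{n,k}=\binom{n}{k}\binom{n+ck}{m+dk}(n-k)!$ satisfy $R_{n,k}=\frac{n!}{k!}[t^n]\,\frac{t^m}{(1-t)^{m+1}}\Big(\frac{t^{d-c}}{(1-t)^d}\Big)^k$, i.e., the triangle $\big[\binom{n}{k}\binom{n+ck}{m+dk}(n-k)!\big]$ is the coefficient array of the exponential Riordan-type pair $\big(\frac{t^m}{(1-t)^{m+1}},\ \frac{t^{d-c}}{(1-t)^d}\big)$. -/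
/-!
Since `(1 - t)⁻¹ ^ (b + 1) = ∑ j, C(b + j, b) tʲ`, the series equals
`t^(m + (d-c)k) / (1 - t)^(m + dk + 1)`, whose `n`-th coefficient is
`C(m + dk + (n - m - (d-c)k), m + dk) = C(n + ck, m + dk)`, while `C(n, k) (n - k)! = n! / k!`.
When `n < m + (d-c)k` both sides vanish: `n` is below the order of the series, and
`n + ck < m + dk`.
-/

open PowerSeries

theorem PowerSeries.inv_one_sub_X {K : Type*} [Field K] : (1 - X : K⟦X⟧)⁻¹ = mk 1 := by
  rw [PowerSeries.inv_eq_iff_mul_eq_one (by simp)]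
  exact mk_one_mul_one_sub_eq_one K

theorem PowerSeries.coeff_X_pow_mul_inv_one_sub_X_pow {K : Type*} [Field K] (a b n : ℕ) :
    coeff n (X ^ a * (1 - X)⁻¹ ^ (b + 1) : K⟦X⟧) =
      if a ≤ n then ((b + (n - a)).choose b : K) else 0 := by
  rw [inv_one_sub_X, mk_one_pow_eq_mk_choose_add, coeff_X_pow_mul', coeff_mk]

theorem Int.choose_toNat_eq_zero {N M : ℤ} (h : N < M) (hM : 0 < M) :
    N.toNat.choose M.toNat = 0 :=
  Nat.choose_eq_zero_of_lt (by omega)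

theorem Int.choose_toNat_add_mul_eq_ite {m n k d : ℕ} (e : ℕ) (hd : 1 ≤ d) :
    ((n : ℤ) + (d - e) * k).toNat.choose ((m : ℤ) + d * k).toNat =
      if m + e * k ≤ n then (m + d * k + (n - (m + e * k))).choose (m + d * k) else 0 := by
  split_ifs with h
  · have hN : (n : ℤ) + (d - e) * k = ((m + d * k + (n - (m + e * k)) : ℕ) : ℤ) := by
      push_cast [h]
      ring
    have hM : ((m : ℤ) + d * k).toNat = m + d * k := by omega
    rw [hN, hM, Int.toNat_natCast]
  · push Not at h
    have hlt : (n : ℤ) + (d - e) * k < m + d * k := by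
      have : (n : ℤ) < m + e * k := by exact_mod_cast h
      linarith
    have hpos : (0 : ℤ) < m + d * k := by
      rcases Nat.eq_zero_or_pos k with rfl | hk
      · simp only [CharP.cast_eq_zero, mul_zero, add_zero] at h ⊢
        omega
      · positivity
    exact Int.choose_toNat_eq_zero hlt hpos

theorem binomial_riordan_first_general (m n k : ℕ) (c d : ℤ)
    (hd : 1 ≤ d) (hcd : c ≤ d) (hk : k ≤ n) :
    ((n.choose k : ℚ) * (Nat.choose ((n : ℤ) + c * k).toNat ((m : ℤ) + d * k).toNat : ℚ) *
        ((n - k).factorial : ℚ)) =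
      ((n.factorial : ℚ) / (k.factorial : ℚ)) *
        PowerSeries.coeff (R := ℚ) n
          (PowerSeries.X ^ m * ((1 - PowerSeries.X)⁻¹) ^ (m + 1) *
            (PowerSeries.X ^ (d - c).toNat * ((1 - PowerSeries.X)⁻¹) ^ d.toNat) ^ k) := by
  obtain ⟨d, rfl⟩ : ∃ d' : ℕ, d = d' := ⟨d.toNat, (Int.toNat_of_nonneg (by omega)).symm⟩
  obtain ⟨e, rfl⟩ : ∃ e : ℕ, c = d - e := ⟨(d - c).toNat, by omega⟩
  have hser : (X ^ m * (1 - X)⁻¹ ^ (m + 1) * (X ^ e * (1 - X)⁻¹ ^ d) ^ k : ℚ⟦X⟧) =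
      X ^ (m + e * k) * (1 - X)⁻¹ ^ (m + d * k + 1) := by
    ring
  have hfac : (n.choose k : ℚ) * (n - k).factorial = n.factorial / k.factorial := by
    rw [Nat.cast_choose ℚ hk]
    field_simp
  rw [Int.choose_toNat_add_mul_eq_ite e (by exact_mod_cast hd), sub_sub_cancel,
    Int.toNat_natCast, Int.toNat_natCast, hser, coeff_X_pow_mul_inv_one_sub_X_pow]
  split_ifs
  · rw [← hfac]
    ring
  · simp

/-- For `d ≥ 1`, `d ≥ c` and `m ≤ n`, the triangle entries
`R_{n,k} = C(n,k)·C(n+ck, m+dk)·(n-k)!` satisfy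
`R_{n,k} = (n!/k!)·[t^n] (t^m/(1-t)^{m+1})·(t^{d-c}/(1-t)^d)^k`,
i.e. the triangle is the coefficient array of the Riordan-type pair
`(t^m/(1-t)^{m+1}, t^{d-c}/(1-t)^d)`. (Binomials with a negative upper entry vanish,
encoded via `Int.toNat`.) -/
theorem binomial_riordan_first (m n k : ℕ) (c d : ℤ)
    (hmn : m ≤ n) (hd : 1 ≤ d) (hcd : c ≤ d) (hk : k ≤ n) :
    ((n.choose k : ℚ) * (Nat.choose ((n : ℤ) + c * k).toNat ((m : ℤ) + d * k).toNat : ℚ) *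
        ((n - k).factorial : ℚ)) =
      ((n.factorial : ℚ) / (k.factorial : ℚ)) *
        PowerSeries.coeff (R := ℚ) n
          (PowerSeries.X ^ m * ((1 - PowerSeries.X)⁻¹) ^ (m + 1) *
            (PowerSeries.X ^ (d - c).toNat * ((1 - PowerSeries.X)⁻¹) ^ d.toNat) ^ k) :=
  binomial_riordan_first_general m n k c d hd hcd hk
end
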